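/- arXiv:2209.10878 — 4 statements merged into one kernel-verified Lean document; each statement's English description precedes it below -/
import Mathlib

section
/- Let γ_A > 0, and let η_min ≤ ηᵢ ≤ η_max with η_min > 0 for i = 1,…,d, and c₁,…,c_d ≥ 0 with S := Σᵢ cᵢ > 0. Then Σᵢ (ηᵢ²/(γ_A + ηᵢ)) cᵢ − (Σᵢ ηᵢ cᵢ)²/(Σᵢ (γ_A + ηᵢ) cᵢ) ≤ (η_max²/(γ_A + η_min) − η_min²/(γ_A + η_max)) · S. -/
/-!
The first sum is at most `η_max² / (γ_A + η_min) · S`, termwise. For the subtracted ratio, the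
numerator `Σ ηᵢ cᵢ` is at least `η_min S ≥ 0` and the denominator `Σ (γ_A + ηᵢ) cᵢ` lies in
`(0, (γ_A + η_max) S]`, so the ratio is at least `(η_min S)² / ((γ_A + η_max) S) = η_min² / (γ_A + η_max) · S`.
-/

open Finset

section WeightedSum

variable {ι : Type*} (s : Finset ι) {c f : ι → ℝ}

lemma sum_mul_le_mul_sum {M : ℝ} (hc : ∀ i ∈ s, 0 ≤ c i) (hf : ∀ i ∈ s, f i ≤ M) :
    ∑ i ∈ s, f i * c i ≤ M * ∑ i ∈ s, c i := by
  rw [mul_sum]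
  exact sum_le_sum fun i hi => mul_le_mul_of_nonneg_right (hf i hi) (hc i hi)

lemma mul_sum_le_sum_mul {m : ℝ} (hc : ∀ i ∈ s, 0 ≤ c i) (hf : ∀ i ∈ s, m ≤ f i) :
    m * ∑ i ∈ s, c i ≤ ∑ i ∈ s, f i * c i := by
  rw [mul_sum]
  exact sum_le_sum fun i hi => mul_le_mul_of_nonneg_right (hf i hi) (hc i hi)

end WeightedSum

lemma sq_div_add_le {γ m M x : ℝ} (hγ : 0 < γ) (hm : 0 < m) (hx : m ≤ x ∧ x ≤ M) :
    x ^ 2 / (γ + x) ≤ M ^ 2 / (γ + m) :=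
  div_le_div₀ (by positivity) (pow_le_pow_left₀ (hm.le.trans hx.1) hx.2 2) (by positivity)
    (by linarith [hx.1])

lemma mul_sq_div_le_sq_div {S B C m M : ℝ} (hS : 0 < S) (hm : 0 ≤ m) (hB : m * S ≤ B)
    (hC : 0 < C) (hCM : C ≤ M * S) :
    m ^ 2 / M * S ≤ B ^ 2 / C := by
  have hM : 0 < M := pos_of_mul_pos_left (hC.trans_le hCM) hS.le
  calc m ^ 2 / M * S = (m * S) ^ 2 / (M * S) := by field_simp
    _ ≤ B ^ 2 / C := div_le_div₀ (by positivity) (pow_le_pow_left₀ (by positivity) hB 2) hC hCM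

/-- the value-of-information gap is bounded by
`(η_max²/(γ_A+η_min) − η_min²/(γ_A+η_max)) · Σᵢ cᵢ`. -/
theorem stmt6 (d : ℕ) (γA ηmin ηmax : ℝ) (hγA : 0 < γA) (hmin : 0 < ηmin)
    (η c : Fin d → ℝ) (hη : ∀ i, ηmin ≤ η i ∧ η i ≤ ηmax)
    (hc : ∀ i, 0 ≤ c i) (hsum : 0 < ∑ i, c i) :
    (∑ i, (η i) ^ 2 / (γA + η i) * c i)
        - (∑ i, η i * c i) ^ 2 / (∑ i, (γA + η i) * c i)
      ≤ (ηmax ^ 2 / (γA + ηmin) - ηmin ^ 2 / (γA + ηmax)) * ∑ i, c i := by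
  have hc' : ∀ i ∈ univ, 0 ≤ c i := fun i _ => hc i
  have hfirst : ∑ i, η i ^ 2 / (γA + η i) * c i ≤ ηmax ^ 2 / (γA + ηmin) * ∑ i, c i :=
    sum_mul_le_mul_sum _ hc' fun i _ => sq_div_add_le hγA hmin (hη i)
  have hdenom_pos : 0 < ∑ i, (γA + η i) * c i :=
    (mul_pos (by linarith) hsum).trans_le
      (mul_sum_le_sum_mul _ hc' fun i _ => add_le_add_right (hη i).1 γA)
  have hsecond :
      ηmin ^ 2 / (γA + ηmax) * ∑ i, c i ≤ (∑ i, η i * c i) ^ 2 / ∑ i, (γA + η i) * c i :=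
    mul_sq_div_le_sq_div hsum hmin.le (mul_sum_le_sum_mul _ hc' fun i _ => (hη i).1) hdenom_pos
      (sum_mul_le_mul_sum _ hc' fun i _ => add_le_add_right (hη i).2 γA)
  rw [sub_mul]
  exact sub_le_sub hfirst hsecond
end

section
/- Let γ_A, γ_P > 0, κ > 0 and Γ = κ I_d. Set D = γ_A I_d + Γ⁻¹. Then the matrix identity holds: γ_P I_d − (γ_P I_d + Γ⁻¹)(γ_P I_d + D)⁻¹(γ_P I_d + Γ⁻¹) = (γ_P I_d − b*(γ_P I_d + Γ⁻¹)), where b* = (γ_P + 1/κ)/(γ_A + γ_P + 1/κ). Consequently φ₀ = χ₀ for radial costs, i.e., the value of information vanishes. -/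
/-!
All matrices involved are scalar multiples of the identity, so the identity collapses to
`(q I)(r I)⁻¹(q I) = (q / r)(q I)` with `q = γ_P + 1/κ`, `r = γ_A + γ_P + 1/κ`, which is where
`b* = q / r` comes from; the equality `φ₀ = χ₀` is the same matrix identity under the integral.
-/

open Matrix

namespace Matrix

variable {n 𝕜 : Type*} [Fintype n] [DecidableEq n] [Field 𝕜]

theorem inv_smul_one (c : 𝕜) : (c • (1 : Matrix n n 𝕜))⁻¹ = c⁻¹ • 1 := by
  rcases eq_or_ne c 0 with rfl | hc
  · simp
  · exact inv_eq_right_inv (by simp [hc])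

theorem smul_one_mul_inv_smul_one_mul_smul_one (q r : 𝕜) :
    (q • 1 : Matrix n n 𝕜) * (r • 1)⁻¹ * (q • 1) = (q / r) • (q • 1) := by
  rw [inv_smul_one, smul_mul_smul_comm, one_mul, smul_mul_smul_comm, one_mul, smul_smul,
    div_eq_mul_inv, mul_comm q r⁻¹]

end Matrix

theorem stmt10_general (d : ℕ) (γA γP κ : ℝ)
    (T : ℝ) (K : ℝ → Fin d → ℝ) :
    (γP • (1 : Matrix (Fin d) (Fin d) ℝ)
        - (γP • (1 : Matrix (Fin d) (Fin d) ℝ) + (κ • (1 : Matrix (Fin d) (Fin d) ℝ))⁻¹)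
          * (γP • (1 : Matrix (Fin d) (Fin d) ℝ)
              + (γA • (1 : Matrix (Fin d) (Fin d) ℝ)
                  + (κ • (1 : Matrix (Fin d) (Fin d) ℝ))⁻¹))⁻¹
          * (γP • (1 : Matrix (Fin d) (Fin d) ℝ) + (κ • (1 : Matrix (Fin d) (Fin d) ℝ))⁻¹)
      = γP • (1 : Matrix (Fin d) (Fin d) ℝ)
        - ((γP + 1 / κ) / (γA + γP + 1 / κ))
            • (γP • (1 : Matrix (Fin d) (Fin d) ℝ) + (κ • (1 : Matrix (Fin d) (Fin d) ℝ))⁻¹)) ∧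
    ((γP / 2) * ∫ s in (0:ℝ)..T, K s ⬝ᵥ
        (γP • (1 : Matrix (Fin d) (Fin d) ℝ)
          - (γP • (1 : Matrix (Fin d) (Fin d) ℝ) + (κ • (1 : Matrix (Fin d) (Fin d) ℝ))⁻¹)
            * ((γA + γP) • (1 : Matrix (Fin d) (Fin d) ℝ)
                + (κ • (1 : Matrix (Fin d) (Fin d) ℝ))⁻¹)⁻¹
            * (γP • (1 : Matrix (Fin d) (Fin d) ℝ)
                + (κ • (1 : Matrix (Fin d) (Fin d) ℝ))⁻¹)).mulVec (K s)
      = (γP / 2) * ∫ s in (0:ℝ)..T, K s ⬝ᵥ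
        (γP • (1 : Matrix (Fin d) (Fin d) ℝ)
          - ((γP + 1 / κ) / (γA + γP + 1 / κ))
              • (γP • (1 : Matrix (Fin d) (Fin d) ℝ)
                  + (κ • (1 : Matrix (Fin d) (Fin d) ℝ))⁻¹)).mulVec (K s)) := by
  have hD : γP • (1 : Matrix (Fin d) (Fin d) ℝ) + (γA • 1 + κ⁻¹ • 1) = (γA + γP + 1 / κ) • 1 := by
    simp only [one_div, add_smul]
    abel
  have hD' : (γA + γP) • (1 : Matrix (Fin d) (Fin d) ℝ) + κ⁻¹ • 1 = (γA + γP + 1 / κ) • 1 := by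
    simp only [one_div, add_smul]
  have hQ : γP • (1 : Matrix (Fin d) (Fin d) ℝ) + κ⁻¹ • 1 = (γP + 1 / κ) • 1 := by
    rw [one_div, add_smul]
  simp only [inv_smul_one]
  rw [hD, hD', hQ, smul_one_mul_inv_smul_one_mul_smul_one]
  exact ⟨rfl, rfl⟩

/-- for the radial cost `Γ = κ I` and `D = γ_A I + Γ⁻¹`, the matrix
identity `γ_P I − (γ_P I + Γ⁻¹)(γ_P I + D)⁻¹(γ_P I + Γ⁻¹) = γ_P I − b*(γ_P I + Γ⁻¹)`
holds with `b* = (γ_P + 1/κ)/(γ_A + γ_P + 1/κ)`; consequently `φ₀ = χ₀`, i.e. the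
value of information vanishes for radial costs. -/
theorem stmt10 (d : ℕ) (γA γP κ : ℝ) (hA : 0 < γA) (hP : 0 < γP) (hκ : 0 < κ)
    (T : ℝ) (K : ℝ → Fin d → ℝ) :
    (γP • (1 : Matrix (Fin d) (Fin d) ℝ)
        - (γP • (1 : Matrix (Fin d) (Fin d) ℝ) + (κ • (1 : Matrix (Fin d) (Fin d) ℝ))⁻¹)
          * (γP • (1 : Matrix (Fin d) (Fin d) ℝ)
              + (γA • (1 : Matrix (Fin d) (Fin d) ℝ)
                  + (κ • (1 : Matrix (Fin d) (Fin d) ℝ))⁻¹))⁻¹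
          * (γP • (1 : Matrix (Fin d) (Fin d) ℝ) + (κ • (1 : Matrix (Fin d) (Fin d) ℝ))⁻¹)
      = γP • (1 : Matrix (Fin d) (Fin d) ℝ)
        - ((γP + 1 / κ) / (γA + γP + 1 / κ))
            • (γP • (1 : Matrix (Fin d) (Fin d) ℝ) + (κ • (1 : Matrix (Fin d) (Fin d) ℝ))⁻¹)) ∧
    ((γP / 2) * ∫ s in (0:ℝ)..T, K s ⬝ᵥ
        (γP • (1 : Matrix (Fin d) (Fin d) ℝ)
          - (γP • (1 : Matrix (Fin d) (Fin d) ℝ) + (κ • (1 : Matrix (Fin d) (Fin d) ℝ))⁻¹)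
            * ((γA + γP) • (1 : Matrix (Fin d) (Fin d) ℝ)
                + (κ • (1 : Matrix (Fin d) (Fin d) ℝ))⁻¹)⁻¹
            * (γP • (1 : Matrix (Fin d) (Fin d) ℝ)
                + (κ • (1 : Matrix (Fin d) (Fin d) ℝ))⁻¹)).mulVec (K s)
      = (γP / 2) * ∫ s in (0:ℝ)..T, K s ⬝ᵥ
        (γP • (1 : Matrix (Fin d) (Fin d) ℝ)
          - ((γP + 1 / κ) / (γA + γP + 1 / κ))
              • (γP • (1 : Matrix (Fin d) (Fin d) ℝ)
                  + (κ • (1 : Matrix (Fin d) (Fin d) ℝ))⁻¹)).mulVec (K s)) :=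
  stmt10_general d γA γP κ T K
end

section
/- Let A be a symmetric positive-definite d×d real matrix and γ_A > 0. Then for every nonzero vector v ∈ ℝ^d: ⟨v, A(γ_A I_d + A)⁻¹ A v⟩ − ⟨v, Av⟩² / ⟨v, (γ_A I_d + A)v⟩ ≥ 0. -/
/-!
Put `B = γ_A I + A`, which is positive definite. Cauchy–Schwarz for the inner product
`⟪x, y⟫_B = xᵀ B y`, applied to `v` and `B⁻¹ A v`, gives `⟨v, A v⟩² ≤ ⟨v, B v⟩ ⟨A v, B⁻¹ A v⟩`,
and `⟨A v, B⁻¹ A v⟩ = ⟨v, A B⁻¹ A v⟩` because `A` is symmetric.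
-/

open Matrix

namespace Matrix

variable {n : Type*} [Fintype n]

theorem PosSemidef.dotProduct_mulVec_sq_le {M : Matrix n n ℝ} (hM : M.PosSemidef)
    (x y : n → ℝ) : (x ⬝ᵥ M *ᵥ y) ^ 2 ≤ (x ⬝ᵥ M *ᵥ x) * (y ⬝ᵥ M *ᵥ y) := by
  let := M.toSeminormedAddCommGroup hM
  let := M.toInnerProductSpace hM
  -- in this structure `⟪x, y⟫_ℝ = (M *ᵥ y) ⬝ᵥ x`
  have h := real_inner_mul_inner_self_le x y
  change (M *ᵥ y) ⬝ᵥ x * ((M *ᵥ y) ⬝ᵥ x) ≤ (M *ᵥ x) ⬝ᵥ x * ((M *ᵥ y) ⬝ᵥ y) at h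
  simpa only [sq, dotProduct_comm _ x, dotProduct_comm _ y] using h

theorem IsSymm.dotProduct_mul_mul_mulVec {A : Matrix n n ℝ} (hA : A.IsSymm) (C : Matrix n n ℝ)
    (v : n → ℝ) : v ⬝ᵥ (A * C * A) *ᵥ v = A *ᵥ v ⬝ᵥ C *ᵥ (A *ᵥ v) := by
  rw [← mulVec_mulVec, ← mulVec_mulVec, dotProduct_mulVec, ← mulVec_transpose, hA.eq]

variable [DecidableEq n]

theorem PosDef.dotProduct_sq_le {B : Matrix n n ℝ} (hB : B.PosDef) (x w : n → ℝ) :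
    (x ⬝ᵥ w) ^ 2 ≤ (x ⬝ᵥ B *ᵥ x) * (w ⬝ᵥ B⁻¹ *ᵥ w) := by
  have hBB : B * B⁻¹ = 1 := mul_nonsing_inv B hB.det_pos.ne'.isUnit
  have h := hB.posSemidef.dotProduct_mulVec_sq_le x (B⁻¹ *ᵥ w)
  rwa [mulVec_mulVec, hBB, one_mulVec, dotProduct_comm (B⁻¹ *ᵥ w)] at h

theorem PosDef.dotProduct_sq_div_le {B : Matrix n n ℝ} (hB : B.PosDef) (x w : n → ℝ) :
    (x ⬝ᵥ w) ^ 2 / (x ⬝ᵥ B *ᵥ x) ≤ w ⬝ᵥ B⁻¹ *ᵥ w :=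
  div_le_of_le_mul₀ (by simpa using hB.posSemidef.dotProduct_mulVec_nonneg x)
    (by simpa using hB.inv.posSemidef.dotProduct_mulVec_nonneg w)
    (by rw [mul_comm]; exact hB.dotProduct_sq_le x w)

end Matrix

theorem stmt11_general (d : ℕ) (A : Matrix (Fin d) (Fin d) ℝ) (hA : A.PosDef)
    (γA : ℝ) (hγA : 0 < γA) (v : Fin d → ℝ) :
    0 ≤ v ⬝ᵥ (A * (γA • (1 : Matrix (Fin d) (Fin d) ℝ) + A)⁻¹ * A).mulVec v
        - (v ⬝ᵥ A.mulVec v) ^ 2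
            / (v ⬝ᵥ (γA • (1 : Matrix (Fin d) (Fin d) ℝ) + A).mulVec v) := by
  have hB : (γA • (1 : Matrix (Fin d) (Fin d) ℝ) + A).PosDef :=
    (PosDef.one.smul hγA).add_posSemidef hA.posSemidef
  have hAsymm : A.IsSymm := by simpa using hA.isHermitian
  rw [sub_nonneg, hAsymm.dotProduct_mul_mul_mulVec]
  exact hB.dotProduct_sq_div_le v (A *ᵥ v)

/-- for `A` symmetric positive definite and `γ_A > 0`, for every nonzero `v`,
`⟨v, A(γ_A I + A)⁻¹ A v⟩ − ⟨v, Av⟩²/⟨v, (γ_A I + A)v⟩ ≥ 0`. -/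
theorem stmt11 (d : ℕ) (A : Matrix (Fin d) (Fin d) ℝ) (hAsym : A.IsSymm) (hA : A.PosDef)
    (γA : ℝ) (hγA : 0 < γA) (v : Fin d → ℝ) (hv : v ≠ 0) :
    0 ≤ v ⬝ᵥ (A * (γA • (1 : Matrix (Fin d) (Fin d) ℝ) + A)⁻¹ * A).mulVec v
        - (v ⬝ᵥ A.mulVec v) ^ 2
            / (v ⬝ᵥ (γA • (1 : Matrix (Fin d) (Fin d) ℝ) + A).mulVec v) :=
  stmt11_general d A hA γA hγA v
end

section
/- Let μ : ℬ([0,T]) → ℝ^{d×d} be a matrix-valued measure of bounded variation and let R : [0,T] → ℝ^{d×d} be its differential resolvent, i.e., the unique locally absolutely continuous function with R(0) = I_d and R'(t) = (μ * R)(t) = (R * μ)(t) for a.e. t. Let h : [0,T] → ℝ^d be locally integrable, X₀ ∈ ℝ^d, σ ∈ ℝ^{d×d}, and B a d-dimensional Brownian motion. Then X_t = R(t)X₀ + ∫₀^t R(t−s)h(s)ds + ∫₀^t R(t−s)σ dB_s is a continuous semimartingale solving dX_t = (h(t) + ∫_{[0,t]} μ(ds) X_{t−s}) dt + σ dB_t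 with X₀ as initial condition. -/
open MeasureTheory Matrix

/-- The convolution `(μ * f)(t) = ∫_{[0,t]} μ(ds) f(t−s)` of a vector-valued function
with a matrix-valued measure of bounded variation, the latter encoded as a difference
`μ = μp − μn` of matrices of finite (nonnegative) measures. -/
noncomputable def measConvVec (d : ℕ) (μp μn : Fin d → Fin d → Measure ℝ)
    (f : ℝ → Fin d → ℝ) (t : ℝ) : Fin d → ℝ :=
  fun i => ∑ j, ((∫ s in Set.Icc (0:ℝ) t, f (t - s) j ∂(μp i j))
    - ∫ s in Set.Icc (0:ℝ) t, f (t - s) j ∂(μn i j))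

/-- The convolution `(μ * R)(t) = ∫_{[0,t]} μ(ds) R(t−s)` for a matrix-valued function. -/
noncomputable def measConvMat (d : ℕ) (μp μn : Fin d → Fin d → Measure ℝ)
    (R : ℝ → Matrix (Fin d) (Fin d) ℝ) (t : ℝ) : Matrix (Fin d) (Fin d) ℝ :=
  Matrix.of fun i k => ∑ j, ((∫ s in Set.Icc (0:ℝ) t, R (t - s) j k ∂(μp i j))
    - ∫ s in Set.Icc (0:ℝ) t, R (t - s) j k ∂(μn i j))


/-!
Write `M = μ * R`, so that the resolvent equation says `∫_0^t M = R(t) - I`, and `c = σ b`; the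
process is `X = R X₀ + R ⋆ h + c + M ⋆ c`, where `⋆` is convolution on `[0, t]` against Lebesgue
measure. Convolution with a measure and Lebesgue convolution associate (Fubini on the triangle
`s, r ≥ 0, s + r ≤ t`), so `μ * X = M X₀ + M ⋆ h + μ * (c + M ⋆ c)`. Integrating over `[0, t]`:
`∫ M X₀ = (R(t) - I) X₀` and `∫ M ⋆ h = (R - I) ⋆ h`; and since `∫_0^w (c + M ⋆ c) = (R ⋆ c)(w)`,
integration commuting with `μ *` gives `∫_0^t μ * (c + M ⋆ c) = (μ * (R ⋆ c))(t) = (M ⋆ c)(t)`.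
The three terms add up to `X(t) - X₀ - ∫_0^t h - c(t)`. Continuity of `X` then follows from the
integral equation.
-/

open Set

namespace Volterra

lemma eval_intervalIntegral {ι : Type*} [Fintype ι] {F : ℝ → ι → ℝ} {a b : ℝ}
    (hF : ∀ i, IntervalIntegrable (fun s => F s i) volume a b) (i : ι) :
    (∫ s in a..b, F s) i = ∫ s in a..b, F s i := by
  simp only [intervalIntegral.intervalIntegral_eq_integral_uIoc, Pi.smul_apply,
    eval_integral (fun i => (hF i).def')]

section Interval

variable {E : Type*} [NormedAddCommGroup E] [NormedSpace ℝ E] {T : ℝ}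

lemma intervalIntegral_congr_of_ae_imp {p : ℝ → Prop} {F G : ℝ → E}
    (hp : ∀ᵐ s, s ∈ Icc 0 T → p s) (hFG : ∀ s ∈ Icc 0 T, p s → F s = G s) {t : ℝ}
    (ht : t ∈ Icc 0 T) : ∫ s in (0 : ℝ)..t, F s = ∫ s in (0 : ℝ)..t, G s := by
  refine intervalIntegral.integral_congr_ae ?_
  filter_upwards [hp] with s hs hst
  rw [uIoc_of_le ht.1] at hst
  have hsT : s ∈ Icc 0 T := ⟨hst.1.le, hst.2.trans ht.2⟩
  exact hFG s hsT (hs hsT)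

lemma continuousOn_of_eq_add_integral {X F c : ℝ → E} {x₀ : E}
    (hX : ∀ t ∈ Icc 0 T, X t = x₀ + (∫ s in (0 : ℝ)..t, F s) + c t)
    (hF : IntegrableOn F (Icc 0 T)) (hc : Continuous c) : ContinuousOn X (Icc 0 T) := by
  refine ((continuousOn_const (c := x₀)).add (intervalIntegral.continuousOn_primitive hF)).add
    hc.continuousOn |>.congr fun t ht => ?_
  rw [hX t ht, intervalIntegral.integral_of_le ht.1]
  rfl

end Interval

def triangle (t : ℝ) : Set (ℝ × ℝ) := {p | 0 ≤ p.1 ∧ 0 ≤ p.2 ∧ p.1 + p.2 ≤ t}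

lemma measurableSet_triangle (t : ℝ) : MeasurableSet (triangle t) :=
  (measurableSet_le measurable_const measurable_fst).inter
    ((measurableSet_le measurable_const measurable_snd).inter
      (measurableSet_le (measurable_fst.add measurable_snd) measurable_const))

lemma mem_triangle_comm {t u r : ℝ} : (u, r) ∈ triangle t ↔ (r, u) ∈ triangle t := by
  simp only [triangle, mem_ofPred_eq, add_comm u]
  tauto

lemma integral_Icc_integral_Icc_eq_integral_indicator_triangle (α β : Measure ℝ) (t : ℝ)
    (F : ℝ → ℝ → ℝ) :
    ∫ u in Icc 0 t, ∫ r in Icc 0 (t - u), F u r ∂β ∂α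
      = ∫ u, ∫ r, (triangle t).indicator (Function.uncurry F) (u, r) ∂β ∂α := by
  rw [← integral_indicator measurableSet_Icc]
  congr 1 with u
  by_cases hu : u ∈ Icc 0 t
  · rw [indicator_of_mem hu, ← integral_indicator measurableSet_Icc]
    congr 1 with r
    simp only [indicator, triangle, mem_Icc, mem_ofPred_eq, Function.uncurry_apply_pair]
    congr 1
    exact propext ⟨fun ⟨h0, h1⟩ => ⟨hu.1, h0, by linarith⟩, fun ⟨_, h0, h1⟩ => ⟨h0, by linarith⟩⟩
  · rw [indicator_of_notMem hu]
    refine (integral_eq_zero_of_ae (Filter.Eventually.of_forall fun r => ?_)).symm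
    refine indicator_of_notMem (fun hp => hu ⟨hp.1, ?_⟩) _
    linarith [hp.2.1, hp.2.2]

lemma integral_Icc_integral_Icc_comm {α β : Measure ℝ} [SFinite α] [SFinite β] {t : ℝ}
    {F : ℝ → ℝ → ℝ} (hF : IntegrableOn (Function.uncurry F) (triangle t) (α.prod β)) :
    ∫ u in Icc 0 t, ∫ r in Icc 0 (t - u), F u r ∂β ∂α
      = ∫ r in Icc 0 t, ∫ u in Icc 0 (t - r), F u r ∂α ∂β := by
  rw [integral_Icc_integral_Icc_eq_integral_indicator_triangle,
    integral_Icc_integral_Icc_eq_integral_indicator_triangle β α t (fun r u => F u r),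
    integral_integral_swap (f := fun u r => (triangle t).indicator (Function.uncurry F) (u, r))
      ((integrable_indicator_iff (measurableSet_triangle t)).2 hF)]
  congr 1 with r
  congr 1 with u
  by_cases h : (u, r) ∈ triangle t
  · simp [indicator_of_mem h, indicator_of_mem (mem_triangle_comm.1 h)]
  · simp [indicator_of_notMem h, indicator_of_notMem (mt mem_triangle_comm.2 h)]


def BddMeasurableOn (T : ℝ) (g : ℝ → ℝ) : Prop :=
  Measurable g ∧ ∃ C, ∀ x ∈ Icc 0 T, |g x| ≤ C

namespace BddMeasurableOn

variable {T : ℝ} {f g : ℝ → ℝ}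

lemma of_continuous (hg : Continuous g) : BddMeasurableOn T g := by
  obtain ⟨C, hC⟩ := isCompact_Icc.exists_bound_of_continuousOn hg.continuousOn (s := Icc 0 T)
  exact ⟨hg.measurable, C, fun x hx => by simpa only [Real.norm_eq_abs] using hC x hx⟩

lemma mono {T' : ℝ} (hg : BddMeasurableOn T g) (hT' : T' ≤ T) : BddMeasurableOn T' g :=
  ⟨hg.1, hg.2.imp fun _ hC x hx => hC x ⟨hx.1, hx.2.trans hT'⟩⟩

lemma add (hf : BddMeasurableOn T f) (hg : BddMeasurableOn T g) :
    BddMeasurableOn T (fun x => f x + g x) := by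
  obtain ⟨⟨Cf, hCf⟩, ⟨Cg, hCg⟩⟩ := And.intro hf.2 hg.2
  exact ⟨hf.1.add hg.1, Cf + Cg, fun x hx =>
    (abs_add_le _ _).trans (add_le_add (hCf x hx) (hCg x hx))⟩

lemma sub (hf : BddMeasurableOn T f) (hg : BddMeasurableOn T g) :
    BddMeasurableOn T (fun x => f x - g x) := by
  obtain ⟨⟨Cf, hCf⟩, ⟨Cg, hCg⟩⟩ := And.intro hf.2 hg.2
  exact ⟨hf.1.sub hg.1, Cf + Cg, fun x hx =>
    (abs_sub _ _).trans (add_le_add (hCf x hx) (hCg x hx))⟩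

lemma mul_const (hg : BddMeasurableOn T g) (c : ℝ) : BddMeasurableOn T (fun x => g x * c) := by
  obtain ⟨C, hC⟩ := hg.2
  exact ⟨hg.1.mul_const c, C * |c|, fun x hx => by
    rw [abs_mul]; exact mul_le_mul_of_nonneg_right (hC x hx) (abs_nonneg c)⟩

lemma finsetSum {ι : Type*} (s : Finset ι) {g : ι → ℝ → ℝ}
    (hg : ∀ i ∈ s, BddMeasurableOn T (g i)) : BddMeasurableOn T (fun x => ∑ i ∈ s, g i x) := by
  classical
  induction s using Finset.induction_on with
  | empty => simpa using of_continuous continuous_const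
  | insert a s has ih =>
    simp only [Finset.sum_insert has]
    exact (hg a (s.mem_insert_self a)).add (ih fun i hi => hg i (Finset.mem_insert_of_mem hi))

lemma integrableOn {μ : Measure ℝ} [IsFiniteMeasureOnCompacts μ] (hg : BddMeasurableOn T g)
    {s : Set ℝ} (hs : s ⊆ Icc 0 T) : IntegrableOn g s μ := by
  obtain ⟨C, hC⟩ := hg.2
  refine IntegrableOn.mono_set ?_ hs
  exact Measure.integrableOn_of_bounded isCompact_Icc.measure_lt_top.ne
    hg.1.aestronglyMeasurable (M := C) (ae_restrict_of_forall_mem measurableSet_Icc hC)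

lemma intervalIntegrable (hg : BddMeasurableOn T g) {t : ℝ} (ht : t ∈ Icc 0 T) :
    IntervalIntegrable g volume 0 t :=
  (intervalIntegrable_iff_integrableOn_Ioc_of_le ht.1).2
    (hg.integrableOn fun _ hx => ⟨hx.1.le, hx.2.trans ht.2⟩)

lemma integrable_comp_sub {ν : Measure ℝ} [IsFiniteMeasureOnCompacts ν]
    (hg : BddMeasurableOn T g) {t : ℝ} (ht : t ∈ Icc 0 T) :
    Integrable (fun r => g (t - r)) (ν.restrict (Icc 0 t)) := by
  obtain ⟨C, hC⟩ := hg.2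
  refine Measure.integrableOn_of_bounded isCompact_Icc.measure_lt_top.ne
    (hg.1.comp (measurable_const.sub measurable_id)).aestronglyMeasurable (M := C)
    (ae_restrict_of_forall_mem measurableSet_Icc fun r hr => hC _ ⟨?_, ?_⟩) <;>
  linarith [hr.1, hr.2, ht.2]

end BddMeasurableOn

noncomputable def measConv (ν : Measure ℝ) (g : ℝ → ℝ) (t : ℝ) : ℝ :=
  ∫ r in Icc 0 t, g (t - r) ∂ν

/-- A set integral over `Ioc 0 t` rather than `∫ in 0..t`, so that it is a section integral of a
measurable function on `ℝ × ℝ` and hence measurable in `t`. -/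
noncomputable def lebConv (A φ : ℝ → ℝ) (t : ℝ) : ℝ :=
  ∫ s in Ioc 0 t, A (t - s) * φ s

lemma measurable_setIntegral_section {ν : Measure ℝ} [SFinite ν] {F : ℝ × ℝ → ℝ}
    (hF : Measurable F) {S : Set (ℝ × ℝ)} (hS : MeasurableSet S) :
    Measurable fun x => ∫ y in {y | (x, y) ∈ S}, F (x, y) ∂ν := by
  have h : (fun x => ∫ y in {y | (x, y) ∈ S}, F (x, y) ∂ν)
      = fun x => ∫ y, S.indicator F (x, y) ∂ν := by
    funext x
    exact (integral_indicator (measurable_prodMk_left hS)).symm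
  rw [h]
  exact (hF.indicator hS).stronglyMeasurable.integral_prod_right'.measurable

section MeasConv

variable {T : ℝ} {ν : Measure ℝ}

lemma measConv_mul_const (g : ℝ → ℝ) (c t : ℝ) :
    measConv ν (fun x => g x * c) t = measConv ν g t * c :=
  integral_mul_const c _

lemma measConv_congr {f g : ℝ → ℝ} (hfg : EqOn f g (Icc 0 T)) {t : ℝ} (ht : t ∈ Icc 0 T) :
    measConv ν f t = measConv ν g t :=
  setIntegral_congr_fun measurableSet_Icc fun r hr =>
    hfg ⟨by linarith [hr.2], by linarith [hr.1, ht.2]⟩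

variable [IsFiniteMeasureOnCompacts ν]

lemma measConv_add {f g : ℝ → ℝ} (hf : BddMeasurableOn T f) (hg : BddMeasurableOn T g)
    {t : ℝ} (ht : t ∈ Icc 0 T) :
    measConv ν (fun x => f x + g x) t = measConv ν f t + measConv ν g t :=
  integral_add (hf.integrable_comp_sub ht) (hg.integrable_comp_sub ht)

lemma measConv_finsetSum {ι : Type*} (s : Finset ι) {g : ι → ℝ → ℝ}
    (hg : ∀ i ∈ s, BddMeasurableOn T (g i)) {t : ℝ} (ht : t ∈ Icc 0 T) :
    measConv ν (fun x => ∑ i ∈ s, g i x) t = ∑ i ∈ s, measConv ν (g i) t :=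
  integral_finsetSum s fun i hi => (hg i hi).integrable_comp_sub ht

lemma BddMeasurableOn.measConv {g : ℝ → ℝ} (hg : BddMeasurableOn T g) :
    BddMeasurableOn T (measConv ν g) := by
  obtain ⟨C, hC⟩ := hg.2
  refine ⟨measurable_setIntegral_section (S := {p | 0 ≤ p.2 ∧ p.2 ≤ p.1})
    (hg.1.comp (measurable_fst.sub measurable_snd))
    ((measurableSet_le measurable_const measurable_snd).inter
      (measurableSet_le measurable_snd measurable_fst)), C * ν.real (Icc 0 T), fun s hs => ?_⟩
  have hC0 : 0 ≤ C := (abs_nonneg _).trans (hC s hs)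
  calc |Volterra.measConv ν g s| = ‖∫ r in Icc 0 s, g (s - r) ∂ν‖ := (Real.norm_eq_abs _).symm
    _ ≤ C * ν.real (Icc 0 s) := by
        refine norm_setIntegral_le_of_norm_le_const (isCompact_Icc.measure_lt_top (μ := ν))
          fun r hr => ?_
        rw [Real.norm_eq_abs]
        exact hC _ ⟨by linarith [hr.2], by linarith [hr.1, hs.2]⟩
    _ ≤ C * ν.real (Icc 0 T) := by
        gcongr
        exacts [isCompact_Icc.measure_lt_top.ne, hs.2]

end MeasConv

section LebConv

variable {T : ℝ}

lemma lebConv_congr_left {A B φ : ℝ → ℝ} {t : ℝ} (hAB : EqOn A B (Icc 0 t)) :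
    lebConv A φ t = lebConv B φ t :=
  setIntegral_congr_fun measurableSet_Ioc fun s hs => by
    rw [hAB ⟨by linarith [hs.2], by linarith [hs.1]⟩]

lemma BddMeasurableOn.integrableOn_lebConv_integrand {A φ : ℝ → ℝ}
    (hA : BddMeasurableOn T A) (hφ : Measurable φ) (hφi : IntegrableOn φ (Icc 0 T))
    {t : ℝ} (ht : t ∈ Icc 0 T) :
    IntegrableOn (fun s => A (t - s) * φ s) (Ioc 0 t) := by
  obtain ⟨C, hC⟩ := hA.2
  have hdom : IntegrableOn (fun s => C * ‖φ s‖) (Icc 0 T) := hφi.norm.const_mul C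
  refine Integrable.mono' (hdom.mono_set fun s hs => ⟨hs.1.le, hs.2.trans ht.2⟩)
    ((hA.1.comp (measurable_const.sub measurable_id)).mul hφ).aestronglyMeasurable
    (ae_restrict_of_forall_mem measurableSet_Ioc fun s hs => ?_)
  rw [norm_mul, Real.norm_eq_abs]
  exact mul_le_mul_of_nonneg_right (hC _ ⟨by linarith [hs.2], by linarith [hs.1, ht.2]⟩)
    (norm_nonneg _)

lemma BddMeasurableOn.lebConv {A φ : ℝ → ℝ} (hA : BddMeasurableOn T A) (hφ : Measurable φ)
    (hφi : IntegrableOn φ (Icc 0 T)) : BddMeasurableOn T (lebConv A φ) := by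
  obtain ⟨C, hC⟩ := hA.2
  refine ⟨measurable_setIntegral_section (S := {p | 0 < p.2 ∧ p.2 ≤ p.1})
    ((hA.1.comp (measurable_fst.sub measurable_snd)).mul (hφ.comp measurable_snd))
    ((measurableSet_lt measurable_const measurable_snd).inter
      (measurableSet_le measurable_snd measurable_fst)),
    C * ∫ s in Icc 0 T, ‖φ s‖, fun t ht => ?_⟩
  have hC0 : 0 ≤ C := (abs_nonneg _).trans (hC t ht)
  have hsub : Ioc 0 t ⊆ Icc 0 T := fun s hs => ⟨hs.1.le, hs.2.trans ht.2⟩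
  have hdom : IntegrableOn (fun s => C * ‖φ s‖) (Icc 0 T) := hφi.norm.const_mul C
  calc |Volterra.lebConv A φ t| ≤ ∫ s in Ioc 0 t, ‖A (t - s) * φ s‖ :=
        (Real.norm_eq_abs _).symm.trans_le (norm_integral_le_integral_norm _)
    _ ≤ ∫ s in Ioc 0 t, C * ‖φ s‖ := by
        refine setIntegral_mono_on (hA.integrableOn_lebConv_integrand hφ hφi ht).norm
          (hdom.mono_set hsub) measurableSet_Ioc fun s hs => ?_
        rw [norm_mul, Real.norm_eq_abs]
        exact mul_le_mul_of_nonneg_right (hC _ ⟨by linarith [hs.2], by linarith [hs.1, ht.2]⟩)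
          (norm_nonneg _)
    _ ≤ ∫ s in Icc 0 T, C * ‖φ s‖ :=
        setIntegral_mono_set hdom
          (Filter.Eventually.of_forall fun s => by positivity) hsub.eventuallyLE
    _ = C * ∫ s in Icc 0 T, ‖φ s‖ := integral_const_mul _ _

lemma lebConv_sub_left {A B φ : ℝ → ℝ} (hA : BddMeasurableOn T A) (hB : BddMeasurableOn T B)
    (hφ : Measurable φ) (hφi : IntegrableOn φ (Icc 0 T)) {t : ℝ} (ht : t ∈ Icc 0 T) :
    lebConv (fun x => A x - B x) φ t = lebConv A φ t - lebConv B φ t := by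
  simp only [lebConv, sub_mul]
  exact integral_sub (hA.integrableOn_lebConv_integrand hφ hφi ht)
    (hB.integrableOn_lebConv_integrand hφ hφi ht)

lemma lebConv_finsetSum_left {ι : Type*} (s : Finset ι) {A : ι → ℝ → ℝ} {φ : ℝ → ℝ}
    (hA : ∀ i ∈ s, BddMeasurableOn T (A i)) (hφ : Measurable φ) (hφi : IntegrableOn φ (Icc 0 T))
    {t : ℝ} (ht : t ∈ Icc 0 T) :
    lebConv (fun x => ∑ i ∈ s, A i x) φ t = ∑ i ∈ s, lebConv (A i) φ t := by
  simp only [lebConv, Finset.sum_mul]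
  exact integral_finsetSum s fun i hi => (hA i hi).integrableOn_lebConv_integrand hφ hφi ht

lemma lebConv_const_left (c : ℝ) (φ : ℝ → ℝ) (t : ℝ) :
    lebConv (fun _ => c) φ t = c * ∫ s in Ioc 0 t, φ s :=
  integral_const_mul c φ

end LebConv

/-- The associativity `ν * (A ⋆ φ) = (ν * A) ⋆ φ`: both sides are the integral of
`A(t - s - r) φ(s)` over the triangle `s, r ≥ 0, s + r ≤ t`. -/
lemma measConv_lebConv (ν : Measure ℝ) [IsFiniteMeasureOnCompacts ν] {A φ : ℝ → ℝ} {t : ℝ}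
    (hA : BddMeasurableOn t A) (hφ : Measurable φ) (hφi : IntegrableOn φ (Icc 0 t)) :
    measConv ν (lebConv A φ) t = lebConv (measConv ν A) φ t := by
  obtain ⟨C, hC⟩ := hA.2
  have hint : IntegrableOn (Function.uncurry fun s r => A (t - s - r) * φ s) (triangle t)
      (volume.prod ν) := by
    have hdom : IntegrableOn (fun p : ℝ × ℝ => C * ‖φ p.1‖ * 1) (Icc 0 t ×ˢ Icc 0 t)
        (volume.prod ν) := by
      rw [IntegrableOn, ← Measure.prod_restrict]
      exact (hφi.norm.const_mul C).mul_prod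
        (integrableOn_const (isCompact_Icc.measure_lt_top (μ := ν)).ne)
    refine Integrable.mono' (hdom.mono_set fun p hp => ⟨⟨hp.1, ?_⟩, ⟨hp.2.1, ?_⟩⟩)
      ((hA.1.comp ((measurable_const.sub measurable_fst).sub measurable_snd)).mul
        (hφ.comp measurable_fst)).aestronglyMeasurable
      (ae_restrict_of_forall_mem (measurableSet_triangle t) fun p hp => ?_)
    · linarith [hp.2.1, hp.2.2]
    · linarith [hp.1, hp.2.2]
    · rw [Function.uncurry_apply_pair, norm_mul, Real.norm_eq_abs, mul_one]
      exact mul_le_mul_of_nonneg_right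
        (hC _ ⟨by linarith [hp.2.2], by linarith [hp.1, hp.2.1]⟩) (norm_nonneg _)
  calc measConv ν (lebConv A φ) t
      = ∫ r in Icc 0 t, ∫ s in Icc 0 (t - r), A (t - s - r) * φ s ∂volume ∂ν := by
        refine setIntegral_congr_fun measurableSet_Icc fun r _ => ?_
        simp only [lebConv, integral_Icc_eq_integral_Ioc, sub_right_comm t r]
    _ = ∫ s in Icc 0 t, ∫ r in Icc 0 (t - s), A (t - s - r) * φ s ∂ν ∂volume :=
        (integral_Icc_integral_Icc_comm hint).symm
    _ = lebConv (measConv ν A) φ t := by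
        simp only [lebConv, measConv, integral_mul_const, integral_Icc_eq_integral_Ioc]

lemma measConv_volume (g : ℝ → ℝ) {t : ℝ} (ht : 0 ≤ t) :
    measConv volume g t = ∫ x in (0 : ℝ)..t, g x := by
  rw [measConv, integral_Icc_eq_integral_Ioc, ← intervalIntegral.integral_of_le ht,
    intervalIntegral.integral_comp_sub_left, sub_self, sub_zero]

lemma lebConv_one_right (A : ℝ → ℝ) {t : ℝ} (ht : 0 ≤ t) :
    lebConv A (fun _ => 1) t = ∫ x in (0 : ℝ)..t, A x := by
  simp only [lebConv, mul_one]
  rw [← integral_Icc_eq_integral_Ioc]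
  exact measConv_volume A ht

lemma integral_measConv (ν : Measure ℝ) [IsFiniteMeasureOnCompacts ν] {g : ℝ → ℝ} {t : ℝ}
    (hg : BddMeasurableOn t g) (ht : 0 ≤ t) :
    ∫ s in (0 : ℝ)..t, measConv ν g s = measConv ν (fun w => ∫ x in (0 : ℝ)..w, g x) t := by
  rw [← lebConv_one_right _ ht, ← measConv_lebConv ν hg measurable_const
    (integrableOn_const isCompact_Icc.measure_lt_top.ne)]
  exact measConv_congr (fun w hw => lebConv_one_right g hw.1) ⟨ht, le_rfl⟩

lemma integral_lebConv {A φ : ℝ → ℝ} {t : ℝ} (hA : BddMeasurableOn t A) (hφ : Measurable φ)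
    (hφi : IntegrableOn φ (Icc 0 t)) (ht : 0 ≤ t) :
    ∫ x in (0 : ℝ)..t, lebConv A φ x = lebConv (fun y => ∫ x in (0 : ℝ)..y, A x) φ t := by
  rw [← measConv_volume _ ht, measConv_lebConv volume hA hφ hφi]
  exact lebConv_congr_left fun y hy => measConv_volume A hy.1

noncomputable def signedConv (νp νn : Measure ℝ) (g : ℝ → ℝ) (t : ℝ) : ℝ :=
  measConv νp g t - measConv νn g t

section SignedConv

variable {T : ℝ} {νp νn : Measure ℝ}

lemma signedConv_mul_const (g : ℝ → ℝ) (c t : ℝ) :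
    signedConv νp νn (fun x => g x * c) t = signedConv νp νn g t * c := by
  simp only [signedConv, measConv_mul_const, sub_mul]

lemma signedConv_congr {f g : ℝ → ℝ} (hfg : EqOn f g (Icc 0 T)) {t : ℝ} (ht : t ∈ Icc 0 T) :
    signedConv νp νn f t = signedConv νp νn g t := by
  rw [signedConv, signedConv, measConv_congr hfg ht, measConv_congr hfg ht]

variable [IsFiniteMeasureOnCompacts νp] [IsFiniteMeasureOnCompacts νn]

lemma BddMeasurableOn.signedConv {g : ℝ → ℝ} (hg : BddMeasurableOn T g) :
    BddMeasurableOn T (signedConv νp νn g) :=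
  hg.measConv.sub hg.measConv

lemma signedConv_add {f g : ℝ → ℝ} (hf : BddMeasurableOn T f) (hg : BddMeasurableOn T g)
    {t : ℝ} (ht : t ∈ Icc 0 T) :
    signedConv νp νn (fun x => f x + g x) t = signedConv νp νn f t + signedConv νp νn g t := by
  simp only [signedConv, measConv_add hf hg ht]
  ring

lemma signedConv_finsetSum {ι : Type*} (s : Finset ι) {g : ι → ℝ → ℝ}
    (hg : ∀ i ∈ s, BddMeasurableOn T (g i)) {t : ℝ} (ht : t ∈ Icc 0 T) :
    signedConv νp νn (fun x => ∑ i ∈ s, g i x) t = ∑ i ∈ s, signedConv νp νn (g i) t := by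
  simp only [signedConv, measConv_finsetSum s hg ht, Finset.sum_sub_distrib]

lemma signedConv_lebConv {A φ : ℝ → ℝ} (hA : BddMeasurableOn T A) (hφ : Measurable φ)
    (hφi : IntegrableOn φ (Icc 0 T)) {t : ℝ} (ht : t ∈ Icc 0 T) :
    signedConv νp νn (lebConv A φ) t = lebConv (signedConv νp νn A) φ t := by
  have hφt : IntegrableOn φ (Icc 0 t) := hφi.mono_set (Icc_subset_Icc le_rfl ht.2)
  rw [signedConv, measConv_lebConv νp (hA.mono ht.2) hφ hφt,
    measConv_lebConv νn (hA.mono ht.2) hφ hφt,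
    ← lebConv_sub_left hA.measConv hA.measConv hφ hφi ht]
  rfl

lemma integral_signedConv {g : ℝ → ℝ} {t : ℝ} (hg : BddMeasurableOn t g) (ht : 0 ≤ t) :
    ∫ s in (0 : ℝ)..t, signedConv νp νn g s
      = signedConv νp νn (fun w => ∫ x in (0 : ℝ)..w, g x) t := by
  rw [signedConv, ← integral_measConv νp hg ht, ← integral_measConv νn hg ht,
    ← intervalIntegral.integral_sub ((hg.measConv).intervalIntegrable ⟨ht, le_rfl⟩)
      ((hg.measConv).intervalIntegrable ⟨ht, le_rfl⟩)]
  rfl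

end SignedConv

noncomputable def matLebConv {d : ℕ} (K : ℝ → Matrix (Fin d) (Fin d) ℝ) (φ : ℝ → Fin d → ℝ)
    (t : ℝ) : Fin d → ℝ :=
  fun i => ∑ k, lebConv (fun x => K x i k) (fun x => φ x k) t

section Vector

variable {d : ℕ} {T : ℝ}

lemma BddMeasurableOn.measurable_pi {f : ℝ → Fin d → ℝ}
    (hf : ∀ j, BddMeasurableOn T (fun x => f x j)) : Measurable f :=
  measurable_pi_iff.2 fun j => (hf j).1

lemma BddMeasurableOn.integrableOn_pi {f : ℝ → Fin d → ℝ}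
    (hf : ∀ j, BddMeasurableOn T (fun x => f x j)) : IntegrableOn f (Icc 0 T) :=
  Integrable.of_eval fun j => (hf j).integrableOn subset_rfl

lemma BddMeasurableOn.mulVec {K : ℝ → Matrix (Fin d) (Fin d) ℝ}
    (hK : ∀ i k, BddMeasurableOn T (fun x => K x i k)) (v : Fin d → ℝ) (i : Fin d) :
    BddMeasurableOn T (fun x => (K x *ᵥ v) i) :=
  BddMeasurableOn.finsetSum Finset.univ fun k _ => (hK i k).mul_const (v k)

lemma BddMeasurableOn.matLebConv {K : ℝ → Matrix (Fin d) (Fin d) ℝ} {φ : ℝ → Fin d → ℝ}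
    (hK : ∀ i k, BddMeasurableOn T (fun x => K x i k)) (hφ : Measurable φ)
    (hφi : IntegrableOn φ (Icc 0 T)) (i : Fin d) :
    BddMeasurableOn T (fun t => matLebConv K φ t i) :=
  BddMeasurableOn.finsetSum _ fun k _ =>
    (hK i k).lebConv (hφ.eval (a := k)) (hφi.eval k)

lemma BddMeasurableOn.add_matLebConv {K : ℝ → Matrix (Fin d) (Fin d) ℝ} {c : ℝ → Fin d → ℝ}
    (hK : ∀ i k, BddMeasurableOn T (fun x => K x i k))
    (hc : ∀ j, BddMeasurableOn T (fun x => c x j)) (j : Fin d) :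
    BddMeasurableOn T (fun x => c x j + Volterra.matLebConv K c x j) :=
  (hc j).add (matLebConv hK (measurable_pi hc) (integrableOn_pi hc) j)

lemma intervalIntegral_mulVec_eq_matLebConv {K : ℝ → Matrix (Fin d) (Fin d) ℝ}
    {φ : ℝ → Fin d → ℝ} (hK : ∀ i k, BddMeasurableOn T (fun x => K x i k)) (hφ : Measurable φ)
    (hφi : IntegrableOn φ (Icc 0 T)) {t : ℝ} (ht : t ∈ Icc 0 T) :
    ∫ s in (0 : ℝ)..t, K (t - s) *ᵥ φ s = matLebConv K φ t := by
  have hint : ∀ i k, IntegrableOn (fun s => K (t - s) i k * φ s k) (Ioc 0 t) := fun i k =>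
    (hK i k).integrableOn_lebConv_integrand (hφ.eval (a := k)) (hφi.eval k) ht
  have hcomp : ∀ i, IntegrableOn (fun s => (K (t - s) *ᵥ φ s) i) (Ioc 0 t) := fun i => by
    simp only [mulVec, dotProduct]
    exact integrable_finsetSum _ fun k _ => hint i k
  funext i
  rw [intervalIntegral.integral_of_le ht.1, eval_integral hcomp]
  simp only [mulVec, dotProduct]
  exact integral_finsetSum _ fun k _ => hint i k

lemma matLebConv_congr_left {K L : ℝ → Matrix (Fin d) (Fin d) ℝ} (φ : ℝ → Fin d → ℝ) {t : ℝ}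
    (hKL : EqOn K L (Icc 0 t)) : matLebConv K φ t = matLebConv L φ t := by
  funext i
  exact Finset.sum_congr rfl fun k _ => lebConv_congr_left fun x hx => by rw [hKL hx]

lemma matLebConv_sub_one_apply {K : ℝ → Matrix (Fin d) (Fin d) ℝ} {φ : ℝ → Fin d → ℝ}
    (hK : ∀ i k, BddMeasurableOn T (fun x => K x i k)) (hφ : Measurable φ)
    (hφi : IntegrableOn φ (Icc 0 T)) {t : ℝ} (ht : t ∈ Icc 0 T) (i : Fin d) :
    matLebConv (fun y => K y - 1) φ t i = matLebConv K φ t i - ∫ s in (0 : ℝ)..t, φ s i := by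
  calc matLebConv (fun y => K y - 1) φ t i
      = ∑ k, (lebConv (fun x => K x i k) (fun x => φ x k) t
          - (1 : Matrix (Fin d) (Fin d) ℝ) i k * ∫ s in Ioc 0 t, φ s k) := by
        refine Finset.sum_congr rfl fun k _ => ?_
        simp only [Matrix.sub_apply]
        rw [lebConv_sub_left (hK i k) (BddMeasurableOn.of_continuous continuous_const)
          (hφ.eval (a := k)) (hφi.eval k) ht, lebConv_const_left]
    _ = matLebConv K φ t i
          - ((1 : Matrix (Fin d) (Fin d) ℝ) *ᵥ fun k => ∫ s in Ioc 0 t, φ s k) i := by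
        rw [Finset.sum_sub_distrib]
        rfl
    _ = matLebConv K φ t i - ∫ s in (0 : ℝ)..t, φ s i := by
        rw [one_mulVec, intervalIntegral.integral_of_le ht.1]

lemma integral_matLebConv_apply {K : ℝ → Matrix (Fin d) (Fin d) ℝ} {φ : ℝ → Fin d → ℝ} {t : ℝ}
    (hK : ∀ i k, BddMeasurableOn t (fun x => K x i k)) (hφ : Measurable φ)
    (hφi : IntegrableOn φ (Icc 0 t)) (ht : 0 ≤ t) (i : Fin d) :
    ∫ x in (0 : ℝ)..t, matLebConv K φ x i
      = matLebConv (fun y => of fun i k => ∫ x in (0 : ℝ)..y, K x i k) φ t i :=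
  (intervalIntegral.integral_finsetSum fun k _ =>
    ((hK i k).lebConv (hφ.eval (a := k)) (hφi.eval k)).intervalIntegrable ⟨ht, le_rfl⟩).trans
    (Finset.sum_congr rfl fun k _ => integral_lebConv (hK i k) (hφ.eval (a := k)) (hφi.eval k) ht)

variable {μp μn : Fin d → Fin d → Measure ℝ}

lemma measConvVec_apply (f : ℝ → Fin d → ℝ) (t : ℝ) (i : Fin d) :
    measConvVec d μp μn f t i = ∑ j, signedConv (μp i j) (μn i j) (fun x => f x j) t :=
  rfl

lemma measConvMat_apply (K : ℝ → Matrix (Fin d) (Fin d) ℝ) (t : ℝ) (i k : Fin d) :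
    measConvMat d μp μn K t i k = ∑ j, signedConv (μp i j) (μn i j) (fun x => K x j k) t :=
  rfl

lemma measConvVec_congr {f g : ℝ → Fin d → ℝ} (hfg : EqOn f g (Icc 0 T)) {t : ℝ}
    (ht : t ∈ Icc 0 T) : measConvVec d μp μn f t = measConvVec d μp μn g t := by
  funext i
  simp only [measConvVec_apply]
  exact Finset.sum_congr rfl fun j _ =>
    signedConv_congr (fun x hx => congrFun (hfg hx) j) ht

variable [∀ i j, IsFiniteMeasureOnCompacts (μp i j)] [∀ i j, IsFiniteMeasureOnCompacts (μn i j)]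

lemma BddMeasurableOn.measConvVec {f : ℝ → Fin d → ℝ}
    (hf : ∀ j, BddMeasurableOn T (fun x => f x j)) (i : Fin d) :
    BddMeasurableOn T (fun t => measConvVec d μp μn f t i) :=
  BddMeasurableOn.finsetSum _ fun j _ => (hf j).signedConv

lemma BddMeasurableOn.measConvMat {K : ℝ → Matrix (Fin d) (Fin d) ℝ}
    (hK : ∀ i k, BddMeasurableOn T (fun x => K x i k)) (i k : Fin d) :
    BddMeasurableOn T (fun t => measConvMat d μp μn K t i k) :=
  BddMeasurableOn.finsetSum Finset.univ fun j _ => (hK j k).signedConv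

lemma measConvVec_add {f g : ℝ → Fin d → ℝ} (hf : ∀ j, BddMeasurableOn T (fun x => f x j))
    (hg : ∀ j, BddMeasurableOn T (fun x => g x j)) {t : ℝ} (ht : t ∈ Icc 0 T) :
    measConvVec d μp μn (f + g) t = measConvVec d μp μn f t + measConvVec d μp μn g t := by
  funext i
  simp only [Pi.add_apply, measConvVec_apply, ← Finset.sum_add_distrib]
  exact Finset.sum_congr rfl fun j _ => signedConv_add (hf j) (hg j) ht

lemma measConvVec_mulVec {K : ℝ → Matrix (Fin d) (Fin d) ℝ}
    (hK : ∀ i k, BddMeasurableOn T (fun x => K x i k)) (v : Fin d → ℝ) {t : ℝ}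
    (ht : t ∈ Icc 0 T) :
    measConvVec d μp μn (fun s => K s *ᵥ v) t = measConvMat d μp μn K t *ᵥ v := by
  funext i
  simp only [measConvVec_apply, mulVec, dotProduct, measConvMat_apply, Finset.sum_mul]
  rw [Finset.sum_comm]
  refine Finset.sum_congr rfl fun j _ => ?_
  rw [signedConv_finsetSum _ (fun k _ => (hK j k).mul_const (v k)) ht]
  exact Finset.sum_congr rfl fun k _ => signedConv_mul_const _ _ _

lemma measConvVec_matLebConv {K : ℝ → Matrix (Fin d) (Fin d) ℝ} {φ : ℝ → Fin d → ℝ}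
    (hK : ∀ i k, BddMeasurableOn T (fun x => K x i k)) (hφ : Measurable φ)
    (hφi : IntegrableOn φ (Icc 0 T)) {t : ℝ} (ht : t ∈ Icc 0 T) :
    measConvVec d μp μn (matLebConv K φ) t = matLebConv (measConvMat d μp μn K) φ t := by
  have hφk : ∀ k, Measurable fun x => φ x k := fun k => hφ.eval (a := k)
  funext i
  calc measConvVec d μp μn (matLebConv K φ) t i
      = ∑ j, ∑ k, lebConv (signedConv (μp i j) (μn i j) (fun x => K x j k)) (fun x => φ x k) t :=
        Finset.sum_congr rfl fun j _ =>
          (signedConv_finsetSum _ (fun k _ => (hK j k).lebConv (hφk k) (hφi.eval k)) ht).trans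
            (Finset.sum_congr rfl fun k _ => signedConv_lebConv (hK j k) (hφk k) (hφi.eval k) ht)
    _ = ∑ k, ∑ j, lebConv (signedConv (μp i j) (μn i j) (fun x => K x j k)) (fun x => φ x k) t :=
        Finset.sum_comm
    _ = matLebConv (measConvMat d μp μn K) φ t i :=
        Finset.sum_congr rfl fun k _ => (lebConv_finsetSum_left _
          (fun j _ => (hK j k).signedConv) (hφk k) (hφi.eval k) ht).symm

lemma integral_measConvVec_apply {f : ℝ → Fin d → ℝ} {t : ℝ}
    (hf : ∀ j, BddMeasurableOn t (fun x => f x j)) (ht : 0 ≤ t) (i : Fin d) :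
    ∫ s in (0 : ℝ)..t, measConvVec d μp μn f s i
      = measConvVec d μp μn (fun w j => ∫ x in (0 : ℝ)..w, f x j) t i :=
  (intervalIntegral.integral_finsetSum fun j _ =>
    (hf j).signedConv.intervalIntegrable ⟨ht, le_rfl⟩).trans
    (Finset.sum_congr rfl fun j _ => integral_signedConv (hf j) ht)

end Vector

/-- The integrated form `R(t) = I + ∫_0^t (μ * R)` of `R' = μ * R`, `R(0) = I`. -/
def IsResolventOn (d : ℕ) (μp μn : Fin d → Fin d → Measure ℝ) (T : ℝ)
    (R : ℝ → Matrix (Fin d) (Fin d) ℝ) : Prop :=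
  ∀ t ∈ Icc 0 T, ∀ i k,
    R t i k = (1 : Matrix (Fin d) (Fin d) ℝ) i k + ∫ s in (0 : ℝ)..t, measConvMat d μp μn R s i k

/-- With `c = σ b`, the last two terms are the stochastic convolution `∫_0^t R(t - s) σ dB_s`
after integration by parts. -/
noncomputable def resolventFormula (d : ℕ) (μp μn : Fin d → Fin d → Measure ℝ)
    (R : ℝ → Matrix (Fin d) (Fin d) ℝ) (X₀ : Fin d → ℝ) (h c : ℝ → Fin d → ℝ) (t : ℝ) :
    Fin d → ℝ :=
  R t *ᵥ X₀ + matLebConv R h t + (c t + matLebConv (measConvMat d μp μn R) c t)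

section Resolvent

variable {d : ℕ} {T : ℝ} {μp μn : Fin d → Fin d → Measure ℝ}
  [∀ i j, IsFiniteMeasureOnCompacts (μp i j)] [∀ i j, IsFiniteMeasureOnCompacts (μn i j)]
  {R : ℝ → Matrix (Fin d) (Fin d) ℝ} {X₀ : Fin d → ℝ} {h c : ℝ → Fin d → ℝ}

lemma add_intervalIntegral_eq_resolventFormula (hR : ∀ i k, BddMeasurableOn T (fun x => R x i k))
    (hh : Measurable h) (hhi : IntegrableOn h (Icc 0 T)) {σ : Matrix (Fin d) (Fin d) ℝ}
    {b : ℝ → Fin d → ℝ} (hb : ∀ j, BddMeasurableOn T (fun x => (σ *ᵥ b x) j)) {t : ℝ}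
    (ht : t ∈ Icc 0 T) :
    R t *ᵥ X₀ + (∫ s in (0 : ℝ)..t, R (t - s) *ᵥ h s) + σ *ᵥ b t
        + ∫ s in (0 : ℝ)..t, (measConvMat d μp μn R (t - s) * σ) *ᵥ b s
      = resolventFormula d μp μn R X₀ h (fun s => σ *ᵥ b s) t := by
  rw [intervalIntegral_mulVec_eq_matLebConv hR hh hhi ht,
    intervalIntegral.integral_congr fun s _ => (mulVec_mulVec (b s) _ σ).symm,
    intervalIntegral_mulVec_eq_matLebConv (BddMeasurableOn.measConvMat hR)
      (BddMeasurableOn.measurable_pi hb) (BddMeasurableOn.integrableOn_pi hb) ht, add_assoc]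
  rfl

lemma integral_measConvMat_mulVec_apply (hR : ∀ i k, BddMeasurableOn T (fun x => R x i k))
    (hRres : IsResolventOn d μp μn T R)
    (v : Fin d → ℝ) {t : ℝ} (ht : t ∈ Icc 0 T) (i : Fin d) :
    ∫ s in (0 : ℝ)..t, (measConvMat d μp μn R s *ᵥ v) i = (R t *ᵥ v) i - v i := by
  have hM : ∀ i k, BddMeasurableOn T (fun x => measConvMat d μp μn R x i k) :=
    BddMeasurableOn.measConvMat hR
  calc ∫ s in (0 : ℝ)..t, (measConvMat d μp μn R s *ᵥ v) i
      = ∑ k, (∫ s in (0 : ℝ)..t, measConvMat d μp μn R s i k) * v k :=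
        (intervalIntegral.integral_finsetSum (s := Finset.univ) fun k _ =>
          ((hM i k).mul_const (v k)).intervalIntegrable ht).trans
          (Finset.sum_congr rfl fun k _ => intervalIntegral.integral_mul_const _ _)
    _ = ((R t - 1) *ᵥ v) i := Finset.sum_congr rfl fun k _ => by
        show _ = (R t i k - (1 : Matrix (Fin d) (Fin d) ℝ) i k) * v k
        rw [hRres t ht i k]
        ring
    _ = (R t *ᵥ v) i - v i := by rw [sub_mulVec, one_mulVec, Pi.sub_apply]

lemma integral_matLebConv_measConvMat_apply (hR : ∀ i k, BddMeasurableOn T (fun x => R x i k))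
    (hRres : IsResolventOn d μp μn T R)
    {φ : ℝ → Fin d → ℝ} (hφ : Measurable φ) (hφi : IntegrableOn φ (Icc 0 T)) {t : ℝ}
    (ht : t ∈ Icc 0 T) (i : Fin d) :
    ∫ x in (0 : ℝ)..t, matLebConv (measConvMat d μp μn R) φ x i
      = matLebConv R φ t i - ∫ s in (0 : ℝ)..t, φ s i := by
  rw [integral_matLebConv_apply (fun i k => (BddMeasurableOn.measConvMat hR i k).mono ht.2) hφ
      (hφi.mono_set (Icc_subset_Icc le_rfl ht.2)) ht.1,
    matLebConv_congr_left φ (L := fun y => R y - 1) fun y hy => ?_,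
    matLebConv_sub_one_apply hR hφ hφi ht]
  ext i k
  show _ = R y i k - (1 : Matrix (Fin d) (Fin d) ℝ) i k
  rw [hRres y ⟨hy.1, hy.2.trans ht.2⟩ i k, of_apply]
  ring

lemma integral_measConvVec_add_matLebConv_apply
    (hR : ∀ i k, BddMeasurableOn T (fun x => R x i k))
    (hRres : IsResolventOn d μp μn T R)
    {c : ℝ → Fin d → ℝ} (hc : ∀ j, BddMeasurableOn T (fun x => c x j)) {t : ℝ}
    (ht : t ∈ Icc 0 T) (i : Fin d) :
    ∫ s in (0 : ℝ)..t,
        measConvVec d μp μn (fun w => c w + matLebConv (measConvMat d μp μn R) c w) s i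
      = matLebConv (measConvMat d μp μn R) c t i := by
  have hcm := BddMeasurableOn.measurable_pi hc
  have hci := BddMeasurableOn.integrableOn_pi hc
  have hM := BddMeasurableOn.measConvMat (μp := μp) (μn := μn) hR
  rw [integral_measConvVec_apply (f := fun w => c w + matLebConv (measConvMat d μp μn R) c w)
      (fun j => (BddMeasurableOn.add_matLebConv hM hc j).mono ht.2) ht.1,
    measConvVec_congr (T := t) (g := matLebConv R c) (fun w hw => ?_) ⟨ht.1, le_rfl⟩,
    measConvVec_matLebConv hR hcm hci ht]
  have hw : w ∈ Icc 0 T := ⟨hw.1, hw.2.trans ht.2⟩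
  funext j
  simp only [Pi.add_apply]
  rw [intervalIntegral.integral_add ((hc j).intervalIntegrable hw)
      ((BddMeasurableOn.matLebConv hM hcm hci j).intervalIntegrable hw),
    integral_matLebConv_measConvMat_apply hR hRres hcm hci hw]
  ring

lemma BddMeasurableOn.resolventFormula (hR : ∀ i k, BddMeasurableOn T (fun x => R x i k))
    (hh : Measurable h) (hhi : IntegrableOn h (Icc 0 T))
    (hc : ∀ j, BddMeasurableOn T (fun x => c x j)) (j : Fin d) :
    BddMeasurableOn T (fun t => resolventFormula d μp μn R X₀ h c t j) :=
  (((mulVec hR X₀ j).add (matLebConv hR hh hhi j)).add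
    (add_matLebConv (measConvMat (μp := μp) (μn := μn) hR) hc j) :)

lemma measConvVec_resolventFormula (hR : ∀ i k, BddMeasurableOn T (fun x => R x i k))
    (hh : Measurable h) (hhi : IntegrableOn h (Icc 0 T))
    (hc : ∀ j, BddMeasurableOn T (fun x => c x j)) {t : ℝ} (ht : t ∈ Icc 0 T) :
    measConvVec d μp μn (resolventFormula d μp μn R X₀ h c) t
      = measConvMat d μp μn R t *ᵥ X₀ + matLebConv (measConvMat d μp μn R) h t
        + measConvVec d μp μn (fun w => c w + matLebConv (measConvMat d μp μn R) c w) t := by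
  have hP := BddMeasurableOn.mulVec hR X₀
  have hQ := BddMeasurableOn.matLebConv hR hh hhi
  have hG := BddMeasurableOn.add_matLebConv (BddMeasurableOn.measConvMat (μp := μp) (μn := μn) hR)
    hc
  change measConvVec d μp μn ((fun t => R t *ᵥ X₀) + matLebConv R h
    + fun t => c t + matLebConv (measConvMat d μp μn R) c t) t = _
  rw [measConvVec_add (f := (fun t => R t *ᵥ X₀) + matLebConv R h)
      (g := fun t => c t + matLebConv (measConvMat d μp μn R) c t) (fun j => (hP j).add (hQ j))
      hG ht, measConvVec_add (f := fun t => R t *ᵥ X₀) (g := matLebConv R h) hP hQ ht,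
    measConvVec_mulVec hR X₀ ht, measConvVec_matLebConv hR hh hhi ht]

lemma integral_measConvVec_resolventFormula_apply
    (hR : ∀ i k, BddMeasurableOn T (fun x => R x i k))
    (hRres : IsResolventOn d μp μn T R)
    (hh : Measurable h) (hhi : IntegrableOn h (Icc 0 T))
    (hc : ∀ j, BddMeasurableOn T (fun x => c x j)) {t : ℝ} (ht : t ∈ Icc 0 T) (i : Fin d) :
    ∫ s in (0 : ℝ)..t, measConvVec d μp μn (resolventFormula d μp μn R X₀ h c) s i
      = ((R t *ᵥ X₀) i - X₀ i) + (matLebConv R h t i - ∫ s in (0 : ℝ)..t, h s i)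
        + matLebConv (measConvMat d μp μn R) c t i := by
  have hM := BddMeasurableOn.measConvMat (μp := μp) (μn := μn) hR
  have hA := (BddMeasurableOn.mulVec hM X₀ i).intervalIntegrable ht
  have hB := (BddMeasurableOn.matLebConv hM hh hhi i).intervalIntegrable ht
  have hC := (BddMeasurableOn.measConvVec (μp := μp) (μn := μn)
    (f := fun w => c w + matLebConv (measConvMat d μp μn R) c w)
    (BddMeasurableOn.add_matLebConv hM hc) i).intervalIntegrable ht
  have hsub : uIcc 0 t ⊆ Icc 0 T := by
    rw [uIcc_of_le ht.1]
    exact Icc_subset_Icc le_rfl ht.2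
  rw [intervalIntegral.integral_congr fun s hs =>
    congrFun (measConvVec_resolventFormula hR hh hhi hc (hsub hs)) i]
  simp only [Pi.add_apply]
  rw [intervalIntegral.integral_add (hA.add hB) hC, intervalIntegral.integral_add hA hB,
    integral_measConvMat_mulVec_apply hR hRres X₀ ht i,
    integral_matLebConv_measConvMat_apply hR hRres hh hhi ht i,
    integral_measConvVec_add_matLebConv_apply hR hRres hc ht i]

theorem resolventFormula_eq_add_integral (hR : ∀ i k, BddMeasurableOn T (fun x => R x i k))
    (hRres : IsResolventOn d μp μn T R)
    (hh : Measurable h) (hhi : IntegrableOn h (Icc 0 T))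
    (hc : ∀ j, BddMeasurableOn T (fun x => c x j)) {t : ℝ} (ht : t ∈ Icc 0 T) :
    resolventFormula d μp μn R X₀ h c t = X₀
      + (∫ s in (0 : ℝ)..t, (h s + measConvVec d μp μn (resolventFormula d μp μn R X₀ h c) s))
      + c t := by
  have hhI : ∀ j, IntervalIntegrable (fun s => h s j) volume 0 t := fun j =>
    (intervalIntegrable_iff_integrableOn_Icc_of_le ht.1).2
      (IntegrableOn.mono_set (hhi.eval j) (Icc_subset_Icc le_rfl ht.2))
  have hμY : ∀ j, IntervalIntegrable
      (fun s => measConvVec d μp μn (resolventFormula d μp μn R X₀ h c) s j) volume 0 t :=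
    fun j => (BddMeasurableOn.measConvVec (BddMeasurableOn.resolventFormula hR hh hhi hc) j
      |>.intervalIntegrable ht)
  funext i
  rw [Pi.add_apply, Pi.add_apply, eval_intervalIntegral
      (F := fun s => h s + measConvVec d μp μn (resolventFormula d μp μn R X₀ h c) s)
      (fun j => (hhI j).add (hμY j))]
  simp only [Pi.add_apply]
  rw [intervalIntegral.integral_add (hhI i) (hμY i),
    integral_measConvVec_resolventFormula_apply hR hRres hh hhi hc ht]
  simp only [resolventFormula, Pi.add_apply]
  ring

end Resolvent

end Volterra

open Volterra in
theorem stmt16_general (d : ℕ) (T : ℝ)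
    (μp μn : Fin d → Fin d → Measure ℝ)
    [∀ i j, IsFiniteMeasure (μp i j)] [∀ i j, IsFiniteMeasure (μn i j)]
    (R : ℝ → Matrix (Fin d) (Fin d) ℝ) (hRcont : Continuous R)
    (hRres : ∀ t ∈ Set.Icc (0:ℝ) T, ∀ i k,
      R t i k = (1 : Matrix (Fin d) (Fin d) ℝ) i k
        + ∫ s in (0:ℝ)..t, measConvMat d μp μn R s i k)
    (h : ℝ → Fin d → ℝ) (hh : IntegrableOn h (Set.Icc 0 T))
    (X₀ : Fin d → ℝ) (σ : Matrix (Fin d) (Fin d) ℝ)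
    (b : ℝ → Fin d → ℝ) (hbcont : Continuous b)
    (X : ℝ → Fin d → ℝ)
    (hXdef : ∀ t, X t = (R t).mulVec X₀ + (∫ s in (0:ℝ)..t, (R (t - s)).mulVec (h s))
      + σ.mulVec (b t) + ∫ s in (0:ℝ)..t, ((measConvMat d μp μn R (t - s)) * σ).mulVec (b s)) :
    ContinuousOn X (Set.Icc 0 T) ∧
    ∀ t ∈ Set.Icc (0:ℝ) T,
      X t = X₀ + (∫ s in (0:ℝ)..t, (h s + measConvVec d μp μn X s)) + σ.mulVec (b t) := by
  obtain ⟨h₁, hh₁, hhh₁⟩ : ∃ h₁, Measurable h₁ ∧ h =ᵐ[volume.restrict (Icc 0 T)] h₁ :=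
    ⟨hh.1.mk h, hh.1.stronglyMeasurable_mk.measurable, hh.1.ae_eq_mk⟩
  have hh₁i : IntegrableOn h₁ (Icc 0 T) := hh.congr hhh₁
  have hae := (ae_restrict_iff' measurableSet_Icc).1 hhh₁
  have hR : ∀ i k, BddMeasurableOn T (fun x => R x i k) := fun i k =>
    .of_continuous (hRcont.matrix_elem i k)
  have hc : Continuous fun s => σ *ᵥ b s := continuous_const.matrix_mulVec hbcont
  have hcBM : ∀ j, BddMeasurableOn T (fun s => (σ *ᵥ b s) j) := fun j =>
    .of_continuous ((continuous_apply j).comp hc)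
  have hXY : EqOn X (resolventFormula d μp μn R X₀ h₁ fun s => σ *ᵥ b s) (Icc 0 T) := fun t ht => by
    rw [hXdef, intervalIntegral_congr_of_ae_imp hae (fun s _ hs => by rw [hs]) ht]
    exact add_intervalIntegral_eq_resolventFormula hR hh₁ hh₁i hcBM ht
  have hsol : ∀ t ∈ Icc (0 : ℝ) T,
      X t = X₀ + (∫ s in (0 : ℝ)..t, (h s + measConvVec d μp μn X s)) + σ *ᵥ b t := by
    intro t ht
    rw [hXY ht, resolventFormula_eq_add_integral hR hRres hh₁ hh₁i hcBM ht]
    congr 2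
    refine intervalIntegral_congr_of_ae_imp hae (fun s hs hhs => ?_) ht
    rw [hhs, measConvVec_congr hXY hs]
  refine ⟨continuousOn_of_eq_add_integral hsol (hh.add ?_) hc, hsol⟩
  exact (BddMeasurableOn.integrableOn_pi (BddMeasurableOn.measConvVec
    (BddMeasurableOn.resolventFormula hR hh₁ hh₁i hcBM))).congr_fun
    (fun s hs => (measConvVec_congr hXY hs).symm) measurableSet_Icc

/-- existence, pathwise form: let `R` be the differential resolvent of the
bounded-variation measure `μ = μp − μn` (`R(0) = I`, `R` continuous and
`R(t) = I + ∫₀ᵗ (μ*R)(s) ds`, the integrated form of `R' = μ*R = R*μ`).  For every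
Brownian path `b` (any continuous path with `b 0 = 0`), the process
`X_t = R(t)X₀ + ∫₀ᵗ R(t−s)h(s)ds + ∫₀ᵗ R(t−s)σ dB_s`, the stochastic convolution being
written via pathwise integration by parts as `σ b(t) + ∫₀ᵗ (μ*R)(t−s)σ b(s) ds` (using
`R(0) = I` and local absolute continuity of `R`), is continuous and solves
`dX_t = (h(t) + ∫_{[0,t]} μ(ds)X_{t−s})dt + σ dB_t` in integral form. -/
theorem stmt16 (d : ℕ) (T : ℝ) (hT : 0 < T)
    (μp μn : Fin d → Fin d → Measure ℝ)
    [∀ i j, IsFiniteMeasure (μp i j)] [∀ i j, IsFiniteMeasure (μn i j)]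
    (R : ℝ → Matrix (Fin d) (Fin d) ℝ) (hRcont : Continuous R) (hR0 : R 0 = 1)
    (hRres : ∀ t ∈ Set.Icc (0:ℝ) T, ∀ i k,
      R t i k = (1 : Matrix (Fin d) (Fin d) ℝ) i k
        + ∫ s in (0:ℝ)..t, measConvMat d μp μn R s i k)
    (hRresR : ∀ t ∈ Set.Icc (0:ℝ) T,
      measConvMat d μp μn R t
        = Matrix.of fun i k => ∑ j, ((∫ s in Set.Icc (0:ℝ) t, R (t - s) i j ∂(μp j k))
            - ∫ s in Set.Icc (0:ℝ) t, R (t - s) i j ∂(μn j k)))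
    (h : ℝ → Fin d → ℝ) (hh : IntegrableOn h (Set.Icc 0 T))
    (X₀ : Fin d → ℝ) (σ : Matrix (Fin d) (Fin d) ℝ)
    (b : ℝ → Fin d → ℝ) (hbcont : Continuous b) (hb0 : b 0 = 0)
    (X : ℝ → Fin d → ℝ)
    (hXdef : ∀ t, X t = (R t).mulVec X₀ + (∫ s in (0:ℝ)..t, (R (t - s)).mulVec (h s))
      + σ.mulVec (b t) + ∫ s in (0:ℝ)..t, ((measConvMat d μp μn R (t - s)) * σ).mulVec (b s)) :
    ContinuousOn X (Set.Icc 0 T) ∧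
    ∀ t ∈ Set.Icc (0:ℝ) T,
      X t = X₀ + (∫ s in (0:ℝ)..t, (h s + measConvVec d μp μn X s)) + σ.mulVec (b t) :=
  stmt16_general d T μp μn R hRcont hRres h hh X₀ σ b hbcont X hXdef
end
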